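/- arXiv:2412.19762 — 5 statements merged into one kernel-verified Lean document; each statement's English description precedes it below -/
import Mathlib

section
/- Let χ₁, χ₂ be real Laurent polynomials with non-negative coefficients such that χ_i(1) = 1 and χ_i'(1) = 0 for i = 1,2, and with equal constant terms. Write χ_i(t) = χ_i^-(t) + c_i + χ_i^+(t) where χ_i^+ contains the positive-degree terms and χ_i^- the negative-degree terms. If there exist a, b > 0 with χ₁^+(t) = χ₂^+(a t) and χ₁^-(t) = χ₂^-(b t) for all t > 0, then χ₁ = χ₂ (and a = b = 1, provided χ₁^+ and χ₁^- are both nonzero). -/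
open Finset

/-!
Put `d k = κ₁ k - κ₂ k`. Comparing coefficients, `d k = κ₂ k (a ^ k - 1)` in positive degrees,
`d k = κ₂ k (b ^ k - 1)` in negative degrees and `d 0 = 0`, while the normalisations
`χᵢ(1) = 1` and `χᵢ'(1) = 0` give `∑ d k = 0` and `∑ k d k = 0`. Since `κ₂ ≥ 0`, the sign of
`d k` is that of `a - 1` in positive degrees and that of `1 - b` in negative ones. Hence if
`(a - 1)(b - 1) ≤ 0` all `d k` have one sign, and otherwise all `k d k` have one sign; either way
a vanishing sum forces `d = 0`.
-/

open Polynomial in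
theorem eq_zero_of_sum_mul_zpow_eq_zero {s : Finset ℤ} {c : ℤ → ℝ}
    (h : ∀ t : ℝ, 0 < t → ∑ k ∈ s, c k * t ^ k = 0) : ∀ k ∈ s, c k = 0 := by
  obtain ⟨m, hm⟩ := s.bddBelow
  have hshift : ∀ k ∈ s, (((k - m).toNat : ℕ) : ℤ) = k - m := fun k hk =>
    Int.toNat_of_nonneg (sub_nonneg.2 (hm hk))
  set p : ℝ[X] := ∑ k ∈ s, monomial (k - m).toNat (c k)
  have hp : p = 0 := by
    refine p.eq_zero_of_infinite_isRoot ((Set.Ioi_infinite 0).mono fun t (ht : 0 < t) => ?_)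
    have heval : p.eval t = t ^ (-m) * ∑ k ∈ s, c k * t ^ k := by
      simp only [p, eval_finsetSum, eval_monomial, mul_sum]
      refine sum_congr rfl fun k hk => ?_
      rw [← zpow_natCast, hshift k hk, sub_eq_add_neg, zpow_add₀ ht.ne']
      ring
    show p.eval t = 0
    rw [heval, h t ht, mul_zero]
  intro k hk
  have hcoeff := congrArg (coeff · (k - m).toNat) hp
  simp only [p, finsetSum_coeff, coeff_monomial, coeff_zero] at hcoeff
  have hinj : ∀ j ∈ s, j ≠ k → (j - m).toNat ≠ (k - m).toNat := fun j hj hjk h => hjk (by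
    have := hshift j hj
    have := hshift k hk
    omega)
  rwa [sum_eq_single k (fun j hj hjk => if_neg (hinj j hj hjk)) (absurd hk), if_pos rfl]
    at hcoeff

theorem eq_mul_zpow_of_sum_eq_sum_rescaled {s : Finset ℤ} {κ₁ κ₂ : ℤ → ℝ} {a : ℝ}
    (h : ∀ t : ℝ, 0 < t → ∑ k ∈ s, κ₁ k * t ^ k = ∑ k ∈ s, κ₂ k * (a * t) ^ k) :
    ∀ k ∈ s, κ₁ k = κ₂ k * a ^ k := by
  refine fun k hk => sub_eq_zero.1 <|
    eq_zero_of_sum_mul_zpow_eq_zero (c := fun k => κ₁ k - κ₂ k * a ^ k) (fun t ht => ?_) k hk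
  simp only [sub_mul, sum_sub_distrib, h t ht, mul_zpow, mul_assoc, sub_self]

theorem deriv_sum_mul_zpow_one (s : Finset ℤ) (κ : ℤ → ℝ) :
    deriv (fun t : ℝ => ∑ k ∈ s, κ k * t ^ k) 1 = ∑ k ∈ s, κ k * k := by
  have hd : ∀ k : ℤ, DifferentiableAt ℝ (fun t : ℝ => t ^ k) 1 := fun k =>
    differentiableAt_zpow.2 (Or.inl one_ne_zero)
  rw [deriv_fun_sum fun k _ => (hd k).const_mul (κ k)]
  refine sum_congr rfl fun k _ => ?_
  rw [deriv_const_mul _ (hd k), deriv_zpow]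
  simp

section Rescaling

variable {s : Finset ℤ} {κ₁ κ₂ : ℤ → ℝ} {a b : ℝ}

theorem eq_of_rescaled_of_moment_eq_of_one_le (hκ₂ : ∀ k, 0 ≤ κ₂ k) (hb : 0 < b)
    (ha₁ : 1 ≤ a)
    (hpos : ∀ k ∈ s, 0 < k → κ₁ k = κ₂ k * a ^ k) (hneg : ∀ k ∈ s, k < 0 → κ₁ k = κ₂ k * b ^ k)
    (hzero : κ₁ 0 = κ₂ 0) (hsum : ∑ k ∈ s, κ₁ k = ∑ k ∈ s, κ₂ k)
    (hmom : ∑ k ∈ s, κ₁ k * k = ∑ k ∈ s, κ₂ k * k) :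
    ∀ k ∈ s, κ₁ k = κ₂ k := by
  rcases le_or_gt b 1 with hb₁ | hb₁
  · have hd : ∀ k ∈ s, 0 ≤ κ₁ k - κ₂ k := by
      intro k hk
      rcases lt_trichotomy k 0 with hk0 | rfl | hk0
      · rw [hneg k hk hk0, sub_nonneg]
        exact le_mul_of_one_le_right (hκ₂ k) (one_le_zpow_of_nonpos₀ hb hb₁ hk0.le)
      · rw [hzero, sub_self]
      · rw [hpos k hk hk0, sub_nonneg]
        exact le_mul_of_one_le_right (hκ₂ k) (one_le_zpow₀ ha₁ hk0.le)
    have hd0 := (sum_eq_zero_iff_of_nonneg hd).1 (by rw [sum_sub_distrib, hsum, sub_self])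
    exact fun k hk => sub_eq_zero.1 (hd0 k hk)
  · have hd : ∀ k ∈ s, 0 ≤ (κ₁ k - κ₂ k) * k := by
      intro k hk
      rcases lt_trichotomy k 0 with hk0 | rfl | hk0
      · refine mul_nonneg_of_nonpos_of_nonpos ?_ (by exact_mod_cast hk0.le)
        rw [hneg k hk hk0, sub_nonpos]
        exact mul_le_of_le_one_right (hκ₂ k) (zpow_le_one_of_nonpos₀ hb₁.le hk0.le)
      · simp
      · refine mul_nonneg ?_ (by exact_mod_cast hk0.le)
        rw [hpos k hk hk0, sub_nonneg]
        exact le_mul_of_one_le_right (hκ₂ k) (one_le_zpow₀ ha₁ hk0.le)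
    have hd0 := (sum_eq_zero_iff_of_nonneg hd).1
      (by simp only [sub_mul, sum_sub_distrib, hmom, sub_self])
    intro k hk
    rcases eq_or_ne k 0 with rfl | hk0
    · exact hzero
    · exact sub_eq_zero.1 ((mul_eq_zero.1 (hd0 k hk)).resolve_right (by exact_mod_cast hk0))

theorem eq_of_rescaled_of_moment_eq (hκ₁ : ∀ k, 0 ≤ κ₁ k) (hκ₂ : ∀ k, 0 ≤ κ₂ k)
    (ha : 0 < a) (hb : 0 < b)
    (hpos : ∀ k ∈ s, 0 < k → κ₁ k = κ₂ k * a ^ k) (hneg : ∀ k ∈ s, k < 0 → κ₁ k = κ₂ k * b ^ k)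
    (hzero : κ₁ 0 = κ₂ 0) (hsum : ∑ k ∈ s, κ₁ k = ∑ k ∈ s, κ₂ k)
    (hmom : ∑ k ∈ s, κ₁ k * k = ∑ k ∈ s, κ₂ k * k) :
    ∀ k ∈ s, κ₁ k = κ₂ k := by
  rcases le_or_gt 1 a with ha₁ | ha₁
  · exact eq_of_rescaled_of_moment_eq_of_one_le hκ₂ hb ha₁ hpos hneg hzero hsum hmom
  · -- swapping `κ₁` and `κ₂` replaces `a, b` by `a⁻¹, b⁻¹`
    have hinv : ∀ {c : ℝ}, 0 < c → ∀ k, κ₁ k = κ₂ k * c ^ k → κ₂ k = κ₁ k * c⁻¹ ^ k :=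
      fun hc k hk => by rw [hk, inv_zpow, mul_inv_cancel_right₀ (zpow_ne_zero k hc.ne')]
    have h₂₁ := eq_of_rescaled_of_moment_eq_of_one_le hκ₁ (inv_pos.2 hb)
      ((one_le_inv₀ ha).2 ha₁.le)
      (fun k hk hk0 => hinv ha k (hpos k hk hk0)) (fun k hk hk0 => hinv hb k (hneg k hk hk0))
      hzero.symm hsum.symm hmom.symm
    exact fun k hk => (h₂₁ k hk).symm

end Rescaling

theorem eq_one_of_mul_zpow_eq {κ a : ℝ} {k : ℤ} (ha : 0 < a) (hk : k ≠ 0) (hκ : κ ≠ 0)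
    (h : κ = κ * a ^ k) : a = 1 := by
  by_contra ha₁
  exact hk ((zpow_eq_one_iff_right₀ ha.le ha₁).1 (mul_eq_left₀ hκ |>.1 h.symm))

/-- Proposition (scale rigidity): if `χ₁, χ₂` are Laurent polynomials with non-negative
coefficients, `χᵢ(1) = 1`, `χᵢ'(1) = 0`, equal constant terms, and the positive parts agree
up to scaling by `a > 0` and the negative parts up to scaling by `b > 0`, then `χ₁ = χ₂`;
moreover `a = b = 1` provided the positive and negative parts are nonzero. -/
theorem char_eq_of_rescaled_parts (e f : ℕ) (κ₁ κ₂ : ℤ → ℝ)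
    (hκ₁ : ∀ k, 0 ≤ κ₁ k) (hκ₂ : ∀ k, 0 ≤ κ₂ k)
    (hsupp₁ : ∀ k, κ₁ k ≠ 0 → k ∈ Finset.Icc (-(e : ℤ)) (f : ℤ))
    (hsupp₂ : ∀ k, κ₂ k ≠ 0 → k ∈ Finset.Icc (-(e : ℤ)) (f : ℤ))
    (hsum₁ : ∑ k ∈ Finset.Icc (-(e : ℤ)) (f : ℤ), κ₁ k = 1)
    (hsum₂ : ∑ k ∈ Finset.Icc (-(e : ℤ)) (f : ℤ), κ₂ k = 1)
    (hderiv₁ :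
      deriv (fun t : ℝ => ∑ k ∈ Finset.Icc (-(e : ℤ)) (f : ℤ), κ₁ k * t ^ k) 1 = 0)
    (hderiv₂ :
      deriv (fun t : ℝ => ∑ k ∈ Finset.Icc (-(e : ℤ)) (f : ℤ), κ₂ k * t ^ k) 1 = 0)
    (hconst : κ₁ 0 = κ₂ 0)
    (a b : ℝ) (ha : 0 < a) (hb : 0 < b)
    (hplus : ∀ t : ℝ, 0 < t →
      ∑ k ∈ Finset.Icc (1 : ℤ) (f : ℤ), κ₁ k * t ^ k
        = ∑ k ∈ Finset.Icc (1 : ℤ) (f : ℤ), κ₂ k * (a * t) ^ k)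
    (hminus : ∀ t : ℝ, 0 < t →
      ∑ k ∈ Finset.Icc (-(e : ℤ)) (-1 : ℤ), κ₁ k * t ^ k
        = ∑ k ∈ Finset.Icc (-(e : ℤ)) (-1 : ℤ), κ₂ k * (b * t) ^ k) :
    (∀ k, κ₁ k = κ₂ k) ∧
      ((∃ k, 1 ≤ k ∧ κ₁ k ≠ 0) → (∃ k, k ≤ -1 ∧ κ₁ k ≠ 0) → a = 1 ∧ b = 1) := by
  have hpos := eq_mul_zpow_of_sum_eq_sum_rescaled hplus
  have hneg := eq_mul_zpow_of_sum_eq_sum_rescaled hminus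
  rw [deriv_sum_mul_zpow_one] at hderiv₁ hderiv₂
  have heqOn := eq_of_rescaled_of_moment_eq hκ₁ hκ₂ ha hb
    (fun k hk hk0 => hpos k (by simp only [mem_Icc] at hk ⊢; omega))
    (fun k hk hk0 => hneg k (by simp only [mem_Icc] at hk ⊢; omega))
    hconst (hsum₁.trans hsum₂.symm) (hderiv₁.trans hderiv₂.symm)
  have heq : ∀ k, κ₁ k = κ₂ k := by
    intro k
    by_cases hk : k ∈ Icc (-(e : ℤ)) (f : ℤ)
    · exact heqOn k hk
    · rw [not_not.1 (mt (hsupp₁ k) hk), not_not.1 (mt (hsupp₂ k) hk)]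
  refine ⟨heq, fun ⟨k, hk, hk0⟩ ⟨l, hl, hl0⟩ => ⟨?_, ?_⟩⟩
  · have hk' := mem_Icc.2 ⟨hk, (mem_Icc.1 (hsupp₁ k hk0)).2⟩
    exact eq_one_of_mul_zpow_eq ha (k := k) (by omega) (heq k ▸ hk0) (heq k ▸ hpos k hk')
  · have hl' := mem_Icc.2 ⟨(mem_Icc.1 (hsupp₁ l hl0)).1, hl⟩
    exact eq_one_of_mul_zpow_eq hb (k := l) (by omega) (heq l ▸ hl0) (heq l ▸ hneg l hl')
end

section
/- Let K be a field of characteristic 0, M/K a finite Galois extension with group G acting 2-transitively on a generating G-orbit X = {δ₁,…,δ_n} with ∑ δ_i = 0 and n ≥ 3. If δ₁ - δ₂ = δ_i - δ_j with (i,j) a pair of distinct indices, then i = 1 and j = 2. Consequently Gal(M/K(δ₁-δ₂)) = G₁ ∩ G₂, the intersection of the stabilizers of δ₁ and δ₂. -/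
open Finset

private lemma key_lemma (K M : Type*) [Field K] [CharZero K] [Field M]
    [Algebra K M] [FiniteDimensional K M]
    (n : ℕ) (hn : 3 ≤ n) (δ : Fin n → M) (hinj : Function.Injective δ)
    (horb : ∀ σ : M ≃ₐ[K] M, ∀ i, ∃ j, σ (δ i) = δ j)
    (h2t : ∀ i₁ i₂ j₁ j₂ : Fin n, i₁ ≠ i₂ → j₁ ≠ j₂ →
      ∃ σ : M ≃ₐ[K] M, σ (δ i₁) = δ j₁ ∧ σ (δ i₂) = δ j₂)
    (hsum : ∑ i, δ i = 0)
    (v : Fin n → ℚ) (hv0 : ∑ i, v i = 0) (hvδ : ∑ i, (v i : M) * δ i = 0) :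
    v = 0 := by
  classical
  haveI : CharZero M := charZero_of_injective_algebraMap (algebraMap K M).injective
  let e : (M ≃ₐ[K] M) → Fin n → Fin n := fun σ i => (horb σ i).choose
  have he : ∀ σ i, σ (δ i) = δ (e σ i) := fun σ i => (horb σ i).choose_spec
  have heq : ∀ (σ : M ≃ₐ[K] M) i j, σ (δ i) = δ j → e σ i = j := by
    intro σ i j h
    exact hinj ((he σ i).symm.trans h)
  have e_inv : ∀ (σ : M ≃ₐ[K] M) i, e σ⁻¹ (e σ i) = i := by
    intro σ i
    apply heq
    rw [← he σ i]
    exact σ.symm_apply_apply _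
  have e_inv' : ∀ (σ : M ≃ₐ[K] M) i, e σ (e σ⁻¹ i) = i := by
    intro σ i
    have := e_inv σ⁻¹ i
    rwa [inv_inv] at this
  have hδa : ∀ a : Fin n, v a ≠ 0 → δ a = 0 := by
    intro a hva
    obtain ⟨c, hca⟩ : ∃ c : Fin n, c ≠ a := by
      have : 1 < Fintype.card (Fin n) := by simp; omega
      exact Fintype.exists_ne_of_one_lt_card this a
    set Sa : Finset (M ≃ₐ[K] M) := Finset.univ.filter (fun σ => e σ a = a) with hSa
    set m : ℕ := (Sa.filter (fun σ => e σ c = c)).card with hmdef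
    have hmemSa : ∀ σ, σ ∈ Sa ↔ e σ a = a := by intro σ; simp [hSa]
    -- all "relative pair stabilizers" in Sa have the same cardinality
    have hm : ∀ l k : Fin n, l ≠ a → k ≠ a →
        ((Sa.filter (fun σ => e σ l = k)).card = m) := by
      intro l k hla hka
      obtain ⟨ρ, hρa, hρc⟩ := h2t a c a l (Ne.symm hca) (Ne.symm hla)
      obtain ⟨τ, hτa, hτk⟩ := h2t a k a c (Ne.symm hka) (Ne.symm hca)
      have hρsa : ρ.symm (δ a) = δ a := by
        apply ρ.injective; rw [ρ.apply_symm_apply, hρa]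
      have hρsl : ρ.symm (δ l) = δ c := by
        apply ρ.injective; rw [ρ.apply_symm_apply, hρc]
      have hτsa : τ.symm (δ a) = δ a := by
        apply τ.injective; rw [τ.apply_symm_apply, hτa]
      have hτsc : τ.symm (δ c) = δ k := by
        apply τ.injective; rw [τ.apply_symm_apply, hτk]
      rw [hmdef]
      apply Finset.card_bij' (fun σ _ => τ * σ * ρ) (fun σ _ => τ⁻¹ * σ * ρ⁻¹)
      · intro σ hσ
        simp only [Finset.mem_filter, hmemSa] at hσ ⊢
        obtain ⟨hσa, hσl⟩ := hσ
        refine ⟨?_, ?_⟩ <;> apply heq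
        · show τ (σ (ρ (δ a))) = δ a
          rw [hρa, he σ a, hσa, hτa]
        · show τ (σ (ρ (δ c))) = δ c
          rw [hρc, he σ l, hσl, hτk]
      · intro σ hσ
        simp only [Finset.mem_filter, hmemSa] at hσ ⊢
        obtain ⟨hσa, hσc⟩ := hσ
        refine ⟨?_, ?_⟩ <;> apply heq
        · show τ.symm (σ (ρ.symm (δ a))) = δ a
          rw [hρsa, he σ a, hσa, hτsa]
        · show τ.symm (σ (ρ.symm (δ l))) = δ k
          rw [hρsl, he σ c, hσc, hτsc]
      · intro σ _; group
      · intro σ _; group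
    -- reindexing under σ
    have h1 : ∀ σ : M ≃ₐ[K] M, σ (∑ i, (v i : M) * δ i) = ∑ k, (v (e σ⁻¹ k) : M) * δ k := by
      intro σ
      rw [map_sum]
      have hb : Function.Bijective (e σ) := by
        refine ⟨fun i j hij => ?_, fun k => ⟨e σ⁻¹ k, e_inv' σ k⟩⟩
        have : δ (e σ i) = δ (e σ j) := by rw [hij]
        rw [← he, ← he] at this
        exact hinj (σ.injective this)
      refine Fintype.sum_bijective (e σ) hb _ _ (fun i => ?_)
      rw [map_mul, map_ratCast, he, e_inv]
    have h2 : (0:M) = ∑ k, ((∑ σ ∈ Sa, v (e σ⁻¹ k) : ℚ) : M) * δ k := by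
      have h0 : (0:M) = ∑ σ ∈ Sa, σ (∑ i, (v i:M) * δ i) := by
        rw [hvδ]; simp
      rw [h0]
      calc ∑ σ ∈ Sa, σ (∑ i, (v i:M)*δ i)
          = ∑ σ ∈ Sa, ∑ k, (v (e σ⁻¹ k):M) * δ k :=
            Finset.sum_congr rfl (fun σ _ => h1 σ)
        _ = ∑ k, ∑ σ ∈ Sa, (v (e σ⁻¹ k):M) * δ k := Finset.sum_comm
        _ = ∑ k, ((∑ σ ∈ Sa, v (e σ⁻¹ k):ℚ):M) * δ k := by
            refine Finset.sum_congr rfl fun k _ => ?_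
            rw [← Finset.sum_mul]
            push_cast
            ring
    have einva : ∀ σ ∈ Sa, e σ⁻¹ a = a := by
      intro σ hσ
      have hσa := (hmemSa σ).1 hσ
      calc e σ⁻¹ a = e σ⁻¹ (e σ a) := by rw [hσa]
        _ = a := e_inv σ a
    have hCa : (∑ σ ∈ Sa, v (e σ⁻¹ a)) = (Sa.card : ℚ) * v a := by
      calc ∑ σ ∈ Sa, v (e σ⁻¹ a) = ∑ _σ ∈ Sa, v a :=
            Finset.sum_congr rfl (fun σ hσ => by rw [einva σ hσ])
        _ = (Sa.card : ℚ) * v a := by rw [Finset.sum_const, nsmul_eq_mul]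
    have hCk : ∀ k : Fin n, k ≠ a → (∑ σ ∈ Sa, v (e σ⁻¹ k)) = -(m : ℚ) * v a := by
      intro k hka
      have hmap : ∀ σ ∈ Sa, e σ⁻¹ k ∈ Finset.univ.erase a := by
        intro σ hσ
        refine Finset.mem_erase.2 ⟨fun hcontra => hka ?_, Finset.mem_univ _⟩
        have h := e_inv' σ k
        rw [hcontra, (hmemSa σ).1 hσ] at h
        exact h.symm
      rw [← Finset.sum_fiberwise_of_maps_to hmap (fun σ => v (e σ⁻¹ k))]
      have hinner : ∀ l ∈ Finset.univ.erase a,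
          (∑ σ ∈ Sa.filter (fun σ => e σ⁻¹ k = l), v (e σ⁻¹ k)) = (m:ℚ) * v l := by
        intro l hl
        have hla : l ≠ a := (Finset.mem_erase.1 hl).1
        have hfeq : Sa.filter (fun σ => e σ⁻¹ k = l) = Sa.filter (fun σ => e σ l = k) := by
          refine Finset.filter_congr (fun σ _ => ?_)
          constructor
          · intro h; rw [← h]; exact e_inv' σ k
          · intro h; rw [← h]; exact e_inv σ l
        calc (∑ σ ∈ Sa.filter (fun σ => e σ⁻¹ k = l), v (e σ⁻¹ k))
            = ∑ _σ ∈ Sa.filter (fun σ => e σ⁻¹ k = l), v l := by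
              refine Finset.sum_congr rfl (fun σ hσ => ?_)
              rw [(Finset.mem_filter.1 hσ).2]
          _ = ((Sa.filter (fun σ => e σ⁻¹ k = l)).card : ℚ) * v l := by
              rw [Finset.sum_const, nsmul_eq_mul]
          _ = (m:ℚ) * v l := by rw [hfeq, hm l k hla hka]
      rw [Finset.sum_congr rfl hinner, ← Finset.mul_sum,
        Finset.sum_erase_eq_sub (Finset.mem_univ a), hv0]
      ring
    -- assemble
    have hsplit : (0:M) = ((∑ σ ∈ Sa, v (e σ⁻¹ a) : ℚ):M) * δ a +
        ∑ k ∈ Finset.univ.erase a, ((∑ σ ∈ Sa, v (e σ⁻¹ k) : ℚ):M) * δ k :=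
      h2.trans (Finset.add_sum_erase Finset.univ
        (fun k => ((∑ σ ∈ Sa, v (e σ⁻¹ k) : ℚ):M) * δ k) (Finset.mem_univ a)).symm
    rw [hCa] at hsplit
    have hsplit2 : (0:M) = ((Sa.card:ℚ):M) * v a * δ a +
        ∑ k ∈ Finset.univ.erase a, ((-(m:ℚ) * v a : ℚ):M) * δ k := by
      rw [hsplit]
      congr 1
      · push_cast; ring
      · exact Finset.sum_congr rfl (fun k hk => by rw [hCk k (Finset.mem_erase.1 hk).1])
    rw [← Finset.mul_sum, Finset.sum_erase_eq_sub (Finset.mem_univ a), hsum] at hsplit2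
    have hfin : (((Sa.card + m : ℕ)):M) * ((v a : M) * δ a) = 0 := by
      rw [eq_comm] at hsplit2
      push_cast at hsplit2 ⊢
      linear_combination hsplit2
    have hSapos : 0 < Sa.card := by
      refine Finset.card_pos.2 ⟨1, (hmemSa 1).2 (heq 1 a a ?_)⟩
      simp
    have hne : (((Sa.card + m : ℕ)):M) ≠ 0 := Nat.cast_ne_zero.mpr (by omega)
    have hva' : (v a : M) ≠ 0 := by exact_mod_cast hva
    rcases mul_eq_zero.1 hfin with h | h
    · exact absurd h hne
    · rcases mul_eq_zero.1 h with h' | h'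
      · exact absurd h' hva'
      · exact h'
  -- conclude v = 0
  by_contra hv
  obtain ⟨a, ha⟩ := Function.ne_iff.1 hv
  simp only [Pi.zero_apply] at ha
  obtain ⟨b, hb, hvb⟩ : ∃ b, b ≠ a ∧ v b ≠ 0 := by
    by_contra h
    push_neg at h
    have hs : ∑ i, v i = v a :=
      Finset.sum_eq_single a (fun b _ hba => h b hba) (fun h' => absurd (Finset.mem_univ a) h')
    rw [hv0] at hs
    exact ha hs.symm
  have h1 := hδa a ha
  have h2 := hδa b hvb
  exact hb (hinj (h2.trans h1.symm))


/-- Let `K` be a field of characteristic `0`, `M/K` finite Galois with group acting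
2-transitively on a generating Galois orbit `X = {δ₁,…,δ_n}` with `∑ δᵢ = 0` and `n ≥ 3`.
If `δ₁ - δ₂ = δᵢ - δⱼ` with `i ≠ j`, then `i = 1` and `j = 2`.  Consequently
`Gal(M/K(δ₁-δ₂)) = G₁ ∩ G₂`: an automorphism fixes `δ₁ - δ₂` iff it fixes both `δ₁`
and `δ₂`. -/
theorem difference_determines_pair (K M : Type*) [Field K] [CharZero K] [Field M]
    [Algebra K M] [FiniteDimensional K M] [IsGalois K M]
    (n : ℕ) (hn : 3 ≤ n) (δ : Fin n → M) (hinj : Function.Injective δ)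
    (horb : ∀ σ : M ≃ₐ[K] M, ∀ i, ∃ j, σ (δ i) = δ j)
    (h2t : ∀ i₁ i₂ j₁ j₂ : Fin n, i₁ ≠ i₂ → j₁ ≠ j₂ →
      ∃ σ : M ≃ₐ[K] M, σ (δ i₁) = δ j₁ ∧ σ (δ i₂) = δ j₂)
    (hgen : IntermediateField.adjoin K (Set.range δ) = ⊤)
    (hsum : ∑ i, δ i = 0) :
    (∀ i j : Fin n, i ≠ j →
      δ ⟨0, by omega⟩ - δ ⟨1, by omega⟩ = δ i - δ j → i = ⟨0, by omega⟩ ∧ j = ⟨1, by omega⟩) ∧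
    (∀ σ : M ≃ₐ[K] M,
      σ (δ ⟨0, by omega⟩ - δ ⟨1, by omega⟩) = δ ⟨0, by omega⟩ - δ ⟨1, by omega⟩ ↔
        σ (δ ⟨0, by omega⟩) = δ ⟨0, by omega⟩ ∧ σ (δ ⟨1, by omega⟩) = δ ⟨1, by omega⟩) := by
  classical
  set z : Fin n := ⟨0, by omega⟩ with hz
  set o : Fin n := ⟨1, by omega⟩ with ho
  have hzo : z ≠ o := by simp [hz, ho, Fin.ext_iff]
  have part1 : ∀ i j : Fin n, i ≠ j → δ z - δ o = δ i - δ j → i = z ∧ j = o := by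
    intro i j hij hd
    set v : Fin n → ℚ := fun k =>
      (if k = z then 1 else 0) - (if k = o then 1 else 0)
        - (if k = i then 1 else 0) + (if k = j then 1 else 0) with hv
    have hv0 : ∑ k, v k = 0 := by
      simp only [hv, Finset.sum_add_distrib, Finset.sum_sub_distrib,
        Finset.sum_ite_eq', Finset.mem_univ, if_true]
      ring
    have hvδ : ∑ k, (v k : M) * δ k = 0 := by
      have : ∀ k : Fin n, (v k : M) * δ k =
          (if k = z then δ k else 0) - (if k = o then δ k else 0)
            - (if k = i then δ k else 0) + (if k = j then δ k else 0) := by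
        intro k
        simp only [hv]
        push_cast
        split_ifs <;> ring
      simp only [this, Finset.sum_add_distrib, Finset.sum_sub_distrib,
        Finset.sum_ite_eq', Finset.mem_univ, if_true]
      linear_combination hd
    have hveq : v = 0 := key_lemma K M n hn δ hinj horb h2t hsum v hv0 hvδ
    by_cases hi : i = z
    · refine ⟨hi, ?_⟩
      by_cases hj : j = o
      · exact hj
      · exfalso
        have hvo := congrFun hveq o
        have hoj : ¬ o = j := fun h => hj h.symm
        have hoz : ¬ o = z := Ne.symm hzo
        simp only [hv, Pi.zero_apply] at hvo
        split_ifs at hvo <;> simp_all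
    · exfalso
      have hvz := congrFun hveq z
      have hzi : ¬ z = i := fun h => hi h.symm
      simp only [hv, Pi.zero_apply] at hvz
      split_ifs at hvz <;> simp_all
  refine ⟨part1, fun σ => ⟨fun h => ?_, fun ⟨h1, h2⟩ => by rw [map_sub, h1, h2]⟩⟩
  obtain ⟨i, hi⟩ := horb σ z
  obtain ⟨j, hj⟩ := horb σ o
  have hij : i ≠ j := by
    intro hcontra
    apply hzo
    apply hinj
    apply σ.injective
    rw [hi, hj, hcontra]
  have hd : δ z - δ o = δ i - δ j := by rw [← h, map_sub, hi, hj]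
  obtain ⟨hiz, hjo⟩ := part1 i j hij hd
  rw [hiz] at hi
  rw [hjo] at hj
  exact ⟨hi, hj⟩
end

section
/- Let G be a finite group acting 3-transitively on a finite set X and 2-transitively on a finite set Y, with point stabilizers G₁, G₂ of two distinct points of X and H₁, H₂ of two distinct points of Y. If G₁ ∩ G₂ = H₁ ∩ H₂, then the actions of G on X and Y are isomorphic. -/
/-!
The two-point stabilizer `K = G₁ ∩ G₂` has index `|X| (|X| - 1)` in `G`, and also
`|Y| (|Y| - 1)`, so `|X| = |Y|`. As `K` is transitive on `X ∖ {x₁, x₂}`, it is maximal in `G₁`,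
so `G₁ ∩ H₁` is `G₁` or `K`. In the first case `G₁ ≤ H₁`; in the second the `G₁`-orbit of `y₁`
has `[G₁ : K] = |Y| - 1` points and `G₁` fixes the remaining one. Either way `G₁` lies in a point
stabilizer of `Y` of the same index, hence equals it, and transitive actions with a common
point stabilizer are isomorphic.
-/

open MulAction

theorem Nat.eq_of_mul_sub_one_eq {m n : ℕ} (hm : 0 < m) (hn : 0 < n)
    (h : m * (m - 1) = n * (n - 1)) : m = n := by
  by_contra hne
  rcases Nat.lt_or_gt_of_ne hne with hlt | hlt
  · exact (Nat.mul_lt_mul_of_lt_of_lt hlt (by omega : m - 1 < n - 1)).ne h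
  · exact (Nat.mul_lt_mul_of_lt_of_lt hlt (by omega : n - 1 < m - 1)).ne' h

theorem Subgroup.eq_of_le_of_index_eq {G : Type*} [Group G] {H K : Subgroup G} (hle : H ≤ K)
    (hindex : H.index = K.index) (hK : K.index ≠ 0) : H = K := by
  refine le_antisymm hle (relIndex_eq_one.mp ?_)
  rw [← Nat.mul_eq_right hK, relIndex_mul_index hle, hindex]

namespace MulAction

variable {G X Y : Type*} [Group G] [MulAction G X] [MulAction G Y]

theorem relIndex_stabilizer (H : Subgroup G) (x : X) :
    (stabilizer G x).relIndex H = (orbit H x).ncard :=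
  index_stabilizer H x

theorem orbit_stabilizer_eq_compl_singleton {a b : X} (hab : a ≠ b)
    (h : ∀ c, c ≠ a → c ≠ b → ∃ g : G, g • a = a ∧ g • b = c) :
    orbit (stabilizer G a) b = {a}ᶜ := by
  ext c
  constructor
  · rintro ⟨⟨g, hg : g • a = a⟩, rfl⟩ (hgb : g • b = a)
    exact hab (smul_left_cancel g (hgb.trans hg.symm)).symm
  · intro hca
    rcases eq_or_ne c b with rfl | hcb
    · exact mem_orbit_self c
    obtain ⟨g, hga, hgb⟩ := h c hca hcb
    exact ⟨⟨g, hga⟩, hgb⟩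

theorem isPretransitive_of_orbit_stabilizer_eq_compl {a b : X}
    (ha : orbit (stabilizer G a) b = {a}ᶜ) (hb : orbit (stabilizer G b) a = {b}ᶜ)
    {g : G} (hg : g ∉ stabilizer G a ⊓ stabilizer G b) : IsPretransitive G X := by
  have ha_sub : ∀ x, x ≠ a → x ∈ orbit G b := fun x hx =>
    orbit_subgroup_subset _ _ (ha ▸ hx : x ∈ orbit (stabilizer G a) b)
  have hb_sub : ∀ x, x ≠ b → x ∈ orbit G a := fun x hx =>
    orbit_subgroup_subset _ _ (hb ▸ hx : x ∈ orbit (stabilizer G b) a)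
  have hmem : a ∈ orbit G b := by
    rw [Subgroup.mem_inf, mem_stabilizer_iff, mem_stabilizer_iff, not_and_or] at hg
    rcases hg with hg | hg
    · rw [← orbit_eq_iff.mpr (ha_sub _ hg)]
      exact mem_orbit_smul g a
    · rw [mem_orbit_symm, ← orbit_eq_iff.mpr (hb_sub _ hg)]
      exact mem_orbit_smul g b
  rw [isPretransitive_iff_orbit_eq_univ b, Set.eq_univ_iff_forall]
  intro x
  rcases eq_or_ne x a with rfl | hx
  exacts [hmem, ha_sub x hx]

theorem relIndex_stabilizer_of_orbit_eq_compl [Finite X] {a b : X}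
    (h : orbit (stabilizer G a) b = {a}ᶜ) :
    (stabilizer G b).relIndex (stabilizer G a) = Nat.card X - 1 := by
  rw [relIndex_stabilizer, h, Set.ncard_compl, Set.ncard_singleton]

theorem index_stabilizer_inf_stabilizer [IsPretransitive G X] [Finite X] {a b : X}
    (h : orbit (stabilizer G a) b = {a}ᶜ) :
    (stabilizer G a ⊓ stabilizer G b).index = Nat.card X * (Nat.card X - 1) := by
  rw [← Subgroup.relIndex_mul_index inf_le_left, Subgroup.inf_relIndex_left,
    relIndex_stabilizer_of_orbit_eq_compl h, index_stabilizer_of_transitive, mul_comm]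

theorem stabilizer_le_of_stabilizer_inf_lt {a b : X} (hab : a ≠ b)
    (h : ∀ c d, c ≠ a → c ≠ b → d ≠ a → d ≠ b →
      ∃ k ∈ stabilizer G a ⊓ stabilizer G b, k • c = d)
    {M : Subgroup G} (hM : stabilizer G a ⊓ stabilizer G b < M) (hMa : M ≤ stabilizer G a) :
    stabilizer G a ≤ M := by
  obtain ⟨m, hmM, hmK⟩ := SetLike.exists_of_lt hM
  have hma : m • a = a := hMa hmM
  intro g (hga : g • a = a)
  by_cases hgb : g • b = b
  · exact hM.le ⟨hga, hgb⟩
  have hmb : m • b ≠ b := fun hmb => hmK ⟨hma, hmb⟩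
  have hne : ∀ {k : G}, k • a = a → k • b ≠ a := fun hk hkb =>
    hab (smul_left_cancel _ (hk.trans hkb.symm))
  obtain ⟨k, hk, hkm⟩ := h (m • b) (g • b) (hne hma) hmb (hne hga) hgb
  have hK : (k * m)⁻¹ * g ∈ stabilizer G a ⊓ stabilizer G b := by
    refine Subgroup.mem_inf.mpr ⟨?_, ?_⟩ <;>
      rw [mem_stabilizer_iff, mul_smul, inv_smul_eq_iff, mul_smul]
    · rw [hga, hma, hk.1]
    · rw [hkm]
  simpa only [mul_inv_cancel_left] using mul_mem (mul_mem (hM.le hk) hmM) (hM.le hK)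

theorem exists_forall_smul_eq_of_ncard_orbit_add_one {H Z : Type*} [Group H] [MulAction H Z]
    [Finite Z] {z : Z} (h : (orbit H z).ncard + 1 = Nat.card Z) :
    ∃ z₀ : Z, ∀ g : H, g • z₀ = z₀ := by
  obtain ⟨z₀, hz₀⟩ := Set.ncard_eq_one.mp <|
    show (orbit H z)ᶜ.ncard = 1 by rw [Set.ncard_compl]; omega
  refine ⟨z₀, fun g => ?_⟩
  have : g • z₀ ∈ (orbit H z)ᶜ := by
    rw [Set.mem_compl_iff, ← orbit_eq_iff, orbit_smul, orbit_eq_iff, ← Set.mem_compl_iff, hz₀]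
    rfl
  rwa [hz₀] at this

theorem exists_le_stabilizer_of_relIndex_add_one [Finite Y]
    {H K : Subgroup G} (hKH : K ≤ H) (hmax : ∀ M : Subgroup G, K < M → M ≤ H → H ≤ M)
    {y : Y} (hKy : K ≤ stabilizer G y) (hindex : K.relIndex H + 1 = Nat.card Y) :
    ∃ y₀ : Y, H ≤ stabilizer G y₀ := by
  rcases (le_inf hKH hKy).eq_or_lt with h | h
  · rw [h, Subgroup.inf_relIndex_left, relIndex_stabilizer] at hindex
    obtain ⟨y₀, hy₀⟩ := exists_forall_smul_eq_of_ncard_orbit_add_one hindex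
    exact ⟨y₀, fun g hg => hy₀ ⟨g, hg⟩⟩
  · exact ⟨y, (hmax _ h inf_le_left).trans inf_le_right⟩

theorem exists_equiv_quotient_of_stabilizer_eq [IsPretransitive G X] {x : X} {H : Subgroup G}
    (h : stabilizer G x = H) : ∃ e : X ≃ G ⧸ H, ∀ (g : G) (x : X), e (g • x) = g • e x := by
  subst h
  have hf : Function.Bijective (ofQuotientStabilizer G x) :=
    ⟨injective_ofQuotientStabilizer G x, fun y =>
      let ⟨g, hg⟩ := exists_smul_eq G x y; ⟨g, hg⟩⟩
  refine ⟨(Equiv.ofBijective _ hf).symm, fun g y => ?_⟩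
  rw [Equiv.symm_apply_eq, Equiv.ofBijective_apply, ofQuotientStabilizer_smul,
    ← Equiv.ofBijective_apply _ hf, Equiv.apply_symm_apply]

theorem exists_equivariant_equiv_of_stabilizer_le [IsPretransitive G X] [IsPretransitive G Y]
    [Finite Y] {x : X} {y : Y}
    (hcard : Nat.card X = Nat.card Y) (h : stabilizer G x ≤ stabilizer G y) :
    ∃ e : X ≃ Y, ∀ (g : G) (x : X), e (g • x) = g • e x := by
  have : Nonempty Y := ⟨y⟩
  have heq : stabilizer G x = stabilizer G y := by
    refine Subgroup.eq_of_le_of_index_eq h ?_ ?_ <;>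
      simp only [index_stabilizer_of_transitive]
    exacts [hcard, Nat.card_pos.ne']
  obtain ⟨eX, hX⟩ := exists_equiv_quotient_of_stabilizer_eq heq
  obtain ⟨eY, hY⟩ := exists_equiv_quotient_of_stabilizer_eq (rfl : stabilizer G y = _)
  refine ⟨eX.trans eY.symm, fun g x => ?_⟩
  rw [Equiv.trans_apply, Equiv.trans_apply, Equiv.symm_apply_eq, hY, Equiv.apply_symm_apply, hX]

end MulAction

theorem actions_isomorphic_of_two_point_stabilizers_eq_general
    (G X Y : Type*) [Group G] [Fintype X] [Fintype Y]
    [MulAction G X] [MulAction G Y]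
    (h3t : ∀ x₁ x₂ x₃ y₁ y₂ y₃ : X, x₁ ≠ x₂ → x₁ ≠ x₃ → x₂ ≠ x₃ →
      y₁ ≠ y₂ → y₁ ≠ y₃ → y₂ ≠ y₃ →
      ∃ g : G, g • x₁ = y₁ ∧ g • x₂ = y₂ ∧ g • x₃ = y₃)
    (h2t : ∀ y₁ y₂ z₁ z₂ : Y, y₁ ≠ y₂ → z₁ ≠ z₂ →
      ∃ g : G, g • y₁ = z₁ ∧ g • y₂ = z₂)
    (x₁ x₂ : X) (hx : x₁ ≠ x₂) (y₁ y₂ : Y) (hy : y₁ ≠ y₂)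
    (hstab : MulAction.stabilizer G x₁ ⊓ MulAction.stabilizer G x₂
      = MulAction.stabilizer G y₁ ⊓ MulAction.stabilizer G y₂) :
    ∃ e : X ≃ Y, ∀ (g : G) (x : X), e (g • x) = g • e x := by
  have : Nonempty X := ⟨x₁⟩
  have : Nonempty Y := ⟨y₁⟩
  have hX : ∀ {a b : X}, a ≠ b → orbit (stabilizer G a) b = {a}ᶜ := fun hab =>
    orbit_stabilizer_eq_compl_singleton hab fun c hca hcb =>
      (h3t _ _ c _ c _ hab hca.symm hcb.symm hca.symm hab hcb).imp fun _ hg => ⟨hg.1, hg.2.1⟩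
  have hY : ∀ {a b : Y}, a ≠ b → orbit (stabilizer G a) b = {a}ᶜ := fun hab =>
    orbit_stabilizer_eq_compl_singleton hab fun c hca _ => h2t _ _ _ _ hab hca.symm
  obtain ⟨g, hg, -⟩ := h2t y₁ y₂ y₂ y₁ hy hy.symm
  have hgK : g ∉ stabilizer G y₁ ⊓ stabilizer G y₂ := fun hg' =>
    hy ((mem_stabilizer_iff.mp (Subgroup.mem_inf.mp hg').1).symm.trans hg)
  -- `h3t` is vacuous when `X` has two points, so transitivity on `X` has to come from `hgK`.
  have := isPretransitive_of_orbit_stabilizer_eq_compl (hX hx) (hX hx.symm) (hstab ▸ hgK)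
  have := isPretransitive_of_orbit_stabilizer_eq_compl (hY hy) (hY hy.symm) hgK
  have hcard : Nat.card X = Nat.card Y := Nat.eq_of_mul_sub_one_eq Nat.card_pos Nat.card_pos <| by
    rw [← index_stabilizer_inf_stabilizer (hX hx), hstab, index_stabilizer_inf_stabilizer (hY hy)]
  have hrest : ∀ c d, c ≠ x₁ → c ≠ x₂ → d ≠ x₁ → d ≠ x₂ →
      ∃ k ∈ stabilizer G x₁ ⊓ stabilizer G x₂, k • c = d := fun c d hc₁ hc₂ hd₁ hd₂ =>
    (h3t x₁ x₂ c x₁ x₂ d hx hc₁.symm hc₂.symm hx hd₁.symm hd₂.symm).imp fun _ hg =>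
      ⟨Subgroup.mem_inf.mpr ⟨hg.1, hg.2.1⟩, hg.2.2⟩
  obtain ⟨y, hle⟩ := exists_le_stabilizer_of_relIndex_add_one inf_le_left
    (fun _ => stabilizer_le_of_stabilizer_inf_lt hx hrest) (hstab.le.trans inf_le_left) <| by
      rw [Subgroup.inf_relIndex_left, relIndex_stabilizer_of_orbit_eq_compl (hX hx), hcard,
        Nat.sub_add_cancel Nat.card_pos]
  exact exists_equivariant_equiv_of_stabilizer_le hcard hle

/-- Let a finite group `G` act faithfully and 3-transitively on `X` and faithfully and
2-transitively on `Y`.  If for some distinct `x₁, x₂ ∈ X` and distinct `y₁, y₂ ∈ Y`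
the two-point stabilizers agree, `G₁ ∩ G₂ = H₁ ∩ H₂`, then the actions of `G` on `X`
and `Y` are isomorphic (there is a `G`-equivariant bijection `X ≃ Y`). -/
theorem actions_isomorphic_of_two_point_stabilizers_eq
    (G X Y : Type*) [Group G] [Finite G] [Fintype X] [Fintype Y]
    [MulAction G X] [MulAction G Y] [FaithfulSMul G X] [FaithfulSMul G Y]
    (h3t : ∀ x₁ x₂ x₃ y₁ y₂ y₃ : X, x₁ ≠ x₂ → x₁ ≠ x₃ → x₂ ≠ x₃ →
      y₁ ≠ y₂ → y₁ ≠ y₃ → y₂ ≠ y₃ →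
      ∃ g : G, g • x₁ = y₁ ∧ g • x₂ = y₂ ∧ g • x₃ = y₃)
    (h2t : ∀ y₁ y₂ z₁ z₂ : Y, y₁ ≠ y₂ → z₁ ≠ z₂ →
      ∃ g : G, g • y₁ = z₁ ∧ g • y₂ = z₂)
    (x₁ x₂ : X) (hx : x₁ ≠ x₂) (y₁ y₂ : Y) (hy : y₁ ≠ y₂)
    (hstab : MulAction.stabilizer G x₁ ⊓ MulAction.stabilizer G x₂
      = MulAction.stabilizer G y₁ ⊓ MulAction.stabilizer G y₂) :
    ∃ e : X ≃ Y, ∀ (g : G) (x : X), e (g • x) = g • e x :=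
  actions_isomorphic_of_two_point_stabilizers_eq_general G X Y h3t h2t x₁ x₂ hx y₁ y₂ hy hstab
end

section
/- A primitive permutation group G on a finite set X that contains a transposition (an element fixing all but two points, which it swaps) must be the full symmetric group on X. -/
open Equiv

/-- Conjugation closure: if `swap x y ∈ G` and `σ ∈ G` then `swap (σ x) (σ y) ∈ G`. -/
lemma swap_conj_mem {X : Type*} [DecidableEq X] (G : Subgroup (Perm X))
    {σ : Perm X} (hσ : σ ∈ G) {x y : X} (h : Equiv.swap x y ∈ G) :
    Equiv.swap (σ x) (σ y) ∈ G := by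
  rw [Equiv.swap_apply_apply]
  exact G.mul_mem (G.mul_mem hσ h) (G.inv_mem hσ)

lemma rel_symm {X : Type*} [DecidableEq X] (G : Subgroup (Perm X))
    {x y : X} (h : x = y ∨ Equiv.swap x y ∈ G) :
    y = x ∨ Equiv.swap y x ∈ G := by
  rcases h with rfl | h
  · exact Or.inl rfl
  · exact Or.inr (by rwa [Equiv.swap_comm])

/-- The relation `x = y ∨ swap x y ∈ G` is transitive. -/
lemma rel_trans {X : Type*} [DecidableEq X] (G : Subgroup (Perm X))
    {x y z : X} (h₁ : x = y ∨ Equiv.swap x y ∈ G) (h₂ : y = z ∨ Equiv.swap y z ∈ G) :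
    x = z ∨ Equiv.swap x z ∈ G := by
  rcases h₁ with rfl | h₁
  · exact h₂
  rcases h₂ with rfl | h₂
  · exact Or.inr h₁
  rcases eq_or_ne x z with rfl | hxz
  · exact Or.inl rfl
  rcases eq_or_ne x y with rfl | hxy
  · exact Or.inr h₂
  right
  have h := swap_conj_mem G h₂ h₁
  rwa [Equiv.swap_apply_of_ne_of_ne hxy hxz, Equiv.swap_apply_left] at h

/-- A primitive permutation group `G` on a finite set `X` (transitive, with no nontrivial
invariant partition, expressed via blocks) containing a transposition must be the full
symmetric group on `X`. -/
theorem primitive_with_transposition_eq_top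
    (X : Type*) [Fintype X] [DecidableEq X] (G : Subgroup (Equiv.Perm X))
    (htrans : ∀ x y : X, ∃ σ ∈ G, σ x = y)
    (hprim : ∀ B : Set X, (∀ σ ∈ G, σ '' B = B ∨ Disjoint (σ '' B) B) →
      B.Subsingleton ∨ B = Set.univ)
    (hswap : ∃ σ ∈ G, σ.IsSwap) :
    G = ⊤ := by
  obtain ⟨τ, hτG, a, b, hab, rfl⟩ := hswap
  set B : Set X := {y | a = y ∨ Equiv.swap a y ∈ G} with hBdef
  have hblock : ∀ σ ∈ G, σ '' B = B ∨ Disjoint (σ '' B) B := by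
    intro σ hσ
    have himg : σ '' B = {y | σ a = y ∨ Equiv.swap (σ a) y ∈ G} := by
      ext y
      constructor
      · rintro ⟨x, hx, rfl⟩
        rcases hx with rfl | hx
        · exact Or.inl rfl
        · exact Or.inr (swap_conj_mem G hσ hx)
      · intro hy
        refine ⟨σ⁻¹ y, ?_, by simp⟩
        rcases hy with rfl | hy
        · exact Or.inl (by simp)
        · right
          have := swap_conj_mem G (G.inv_mem hσ) hy
          simpa using this
    by_cases hmem : a = σ a ∨ Equiv.swap a (σ a) ∈ G
    · left
      rw [himg]
      ext y
      exact ⟨fun hy => rel_trans G hmem hy, fun hy => rel_trans G (rel_symm G hmem) hy⟩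
    · right
      rw [himg, Set.disjoint_left]
      rintro y hy hyB
      exact hmem (rel_trans G hyB (rel_symm G hy))
  have hBuniv : B = Set.univ := by
    rcases hprim B hblock with hsub | huniv
    · exact absurd (hsub (Or.inl rfl) (Or.inr hτG)) hab
    · exact huniv
  have hall : ∀ x y : X, x ≠ y → Equiv.swap x y ∈ G := by
    have hmem : ∀ y : X, a = y ∨ Equiv.swap a y ∈ G := fun y => by
      have : y ∈ B := hBuniv ▸ Set.mem_univ y
      exact this
    intro x y hxy
    rcases eq_or_ne a x with rfl | hax
    · exact (hmem y).resolve_left hxy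
    rcases eq_or_ne a y with rfl | hay
    · have hx := (hmem x).resolve_left hax
      rwa [Equiv.swap_comm]
    have hx := (hmem x).resolve_left hax
    have hy := (hmem y).resolve_left hay
    have h := swap_conj_mem G hx hy
    rwa [Equiv.swap_apply_left,
      Equiv.swap_apply_of_ne_of_ne (Ne.symm hay) (Ne.symm hxy)] at h
  rw [eq_top_iff, ← Equiv.Perm.closure_isSwap, Subgroup.closure_le]
  rintro σ ⟨x, y, hxy, rfl⟩
  exact hall x y hxy
end

section
/- Let χ(t) = κ_{-1} t^{-1} + κ₀ + κ₁ t + … + κ_f t^f with all κ_k ≥ 0 and κ_{-1} > 0. For each n ≥ 1, the constant coefficient of χ(t)^n equals n·κ_{-1}^{n-1}·κ_{n-1} plus a polynomial (with integer coefficients, depending only on n) in κ₀, κ_{-1}κ₁, κ_{-1}²κ₂, …, κ_{-1}^{n-2}κ_{n-2}. Consequently, the sequence of constant coefficients I₁, I₂, …, I_{f+1} of powers of χ determines κ₀ and the products κ_{-1}^k κ_k for 1 ≤ k ≤ f. -/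
/-!
Write `χ(t) = t⁻¹ p(t)` with `p(t) = κ₋₁ + κ₀ t + ⋯ + κ_f t^(f+1)`, so the constant coefficient of
`χⁿ` is the coefficient of `tⁿ` in `pⁿ`. Substituting `t ↦ κ₋₁ t` gives `p(κ₋₁ t) = κ₋₁ B(t)` with
`B(t) = 1 + ∑ⱼ κ₋₁ʲ κⱼ t^(j+1)`, and comparing `tⁿ`-coefficients cancels the factor `κ₋₁ⁿ`. Modulo
`t^(n+1)`, the term `κ₋₁^(n-1) κ_(n-1) tⁿ` enters `Bⁿ` only linearly, with coefficient `n` because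
`B(0) = 1`; what remains of `[tⁿ] Bⁿ` is a universal integer polynomial in the earlier scaled
coefficients. These relations are triangular, so the scaled coefficients are recovered one at a
time.
-/

open Finset LaurentPolynomial

namespace Polynomial

variable {R : Type*} [CommRing R]

noncomputable def oneAddSum (c : ℕ → R) (N : ℕ) : R[X] :=
  1 + ∑ j ∈ range N, C (c j) * X ^ (j + 1)

lemma coeff_oneAddSum_zero (c : ℕ → R) (N : ℕ) : (oneAddSum c N).coeff 0 = 1 := by
  simp [oneAddSum, coeff_X_pow]

lemma map_oneAddSum {S : Type*} [CommRing S] (φ : R →+* S) (c : ℕ → R) (N : ℕ) :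
    (oneAddSum c N).map φ = oneAddSum (φ ∘ c) N := by
  simp [oneAddSum, Polynomial.map_sum]

lemma oneAddSum_congr {c c' : ℕ → R} {N : ℕ} (h : ∀ j < N, c j = c' j) :
    oneAddSum c N = oneAddSum c' N := by
  unfold oneAddSum
  congr 1
  exact sum_congr rfl fun j hj => by rw [h j (mem_range.mp hj)]

lemma oneAddSum_eq_of_le {c : ℕ → R} {N M : ℕ} (hNM : N ≤ M) (hc : ∀ j, N ≤ j → c j = 0) :
    oneAddSum c M = oneAddSum c N := by
  unfold oneAddSum
  have htail : ∑ j ∈ Ico N M, C (c j) * X ^ (j + 1) = 0 :=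
    sum_eq_zero fun j hj => by simp [hc j (mem_Ico.mp hj).1]
  rw [← sum_range_add_sum_Ico _ hNM, htail, add_zero]

lemma coeff_oneAddSum_pow_mem (S : Subring R) {c : ℕ → R} {N : ℕ} (hc : ∀ j < N, c j ∈ S)
    (k m : ℕ) : ((oneAddSum c N) ^ k).coeff m ∈ S := by
  let c' : ℕ → S := fun j => if h : j < N then ⟨c j, hc j h⟩ else 0
  have hlift : (oneAddSum c' N).map S.subtype = oneAddSum c N := by
    rw [map_oneAddSum]
    exact oneAddSum_congr fun j hj => by simp [c', hj]
  rw [← hlift, ← Polynomial.map_pow, Polynomial.coeff_map]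
  exact SetLike.coe_mem _

lemma coeff_eq_of_X_pow_dvd_sub {p q : R[X]} {m n : ℕ} (h : X ^ m ∣ p - q) (hn : n < m) :
    p.coeff n = q.coeff n :=
  sub_eq_zero.mp (by simpa using X_pow_dvd_iff.mp h n hn)

/-- Modulo `X ^ (n + 2)`, `oneAddSum c N = B + t` with `B = oneAddSum c n`, `t = c n X ^ (n + 1)`
and `t ^ 2 ≡ 0`, so `(B + t) ^ (n + 1) ≡ B ^ (n + 1) + (n + 1) B ^ n t`; and `B ^ n` has constant
term `1`. -/
lemma coeff_oneAddSum_pow_succ (c : ℕ → R) {n N : ℕ} (hN : n < N) :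
    ((oneAddSum c N) ^ (n + 1)).coeff (n + 1)
      = (n + 1) * c n + ((oneAddSum c n) ^ (n + 1)).coeff (n + 1) := by
  set B := oneAddSum c n with hB_def
  set t : R[X] := C (c n) * X ^ (n + 1) with ht_def
  set E : R[X] := ∑ j ∈ Ico (n + 1) N, C (c j) * X ^ (j + 1)
  have hsplit : oneAddSum c N = B + t + E := by
    rw [oneAddSum, ← sum_range_add_sum_Ico _ hN, sum_range_succ, hB_def, oneAddSum]
    ring
  have hE : X ^ (n + 2) ∣ E :=
    dvd_sum fun j hj => (pow_dvd_pow X (by simp only [mem_Ico] at hj; omega)).mul_left _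
  have ht : X ^ (n + 2) ∣ t ^ 2 := by
    rw [mul_pow, ← pow_mul]
    exact (pow_dvd_pow X (by omega)).mul_left _
  have hlin :
      X ^ (n + 2) ∣ (oneAddSum c N) ^ (n + 1) - (B ^ (n + 1) + B ^ n * t * (n + 1 : R[X])) := by
    have h1 := sub_dvd_pow_sub_pow (B + t + E) (B + t) (n + 1)
    have h2 := sq_dvd_add_pow_sub_sub t B (n + 1)
    rw [add_sub_cancel_left] at h1
    rw [hsplit]
    convert dvd_add (hE.trans h1) (ht.trans h2) using 1
    rw [Nat.add_sub_cancel]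
    push_cast
    ring
  have hB : (B ^ n).coeff 0 = 1 := by
    rw [coeff_zero_eq_eval_zero, eval_pow, ← coeff_zero_eq_eval_zero, coeff_oneAddSum_zero,
      one_pow]
  rw [coeff_eq_of_X_pow_dvd_sub hlin (lt_add_one _), coeff_add, add_comm]
  congr 1
  rw [show B ^ n * t * (n + 1 : R[X]) = C ((n + 1) * c n) * B ^ n * X ^ (n + 1) by
    rw [ht_def]; simp only [C_mul, C_add, C_1, map_natCast]; ring]
  rw [coeff_mul_X_pow', if_pos le_rfl, Nat.sub_self, coeff_C_mul, hB, mul_one]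

lemma coeff_pow_self_eq_of_comp_C_mul_X_eq [IsDomain R] {p B : R[X]} {a : R} (ha : a ≠ 0)
    (h : p.comp (C a * X) = C a * B) (n : ℕ) : (p ^ n).coeff n = (B ^ n).coeff n := by
  have := congrArg (coeff · n) (congrArg (· ^ n) h)
  simp only [← pow_comp, comp_C_mul_X_coeff, mul_pow, ← C_pow, coeff_C_mul] at this
  exact mul_left_cancel₀ (pow_ne_zero n ha) (by rw [← this, mul_comm])

end Polynomial

namespace LaurentPolynomial

variable {R : Type*} [CommRing R]

lemma coeff_zero_T_neg_mul_toLaurent (q : Polynomial R) (n : ℕ) :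
    (T (-n) * q.toLaurent).coeff 0 = q.coeff n := by
  rw [T, AddMonoidAlgebra.coeff_single_mul_apply, neg_neg, add_zero, one_mul, coeff_toLaurent]
  exact Finsupp.mapDomain_apply Nat.cast_injective _ n

end LaurentPolynomial

section StepPolynomial

variable {R : Type*} [CommRing R]

noncomputable def stepLaurent (κ : ℤ → R) (f : ℕ) : R[T;T⁻¹] :=
  ∑ k ∈ Icc (-1 : ℤ) f, C (κ k) * T k

noncomputable def stepPoly (κ : ℤ → R) (f : ℕ) : Polynomial R :=
  ∑ j ∈ range (f + 2), Polynomial.C (κ (j - 1)) * Polynomial.X ^ j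

def scaledCoeff (κ : ℤ → R) (j : ℕ) : R :=
  κ (-1) ^ j * κ j

lemma stepLaurent_eq_T_neg_one_mul (κ : ℤ → R) (f : ℕ) :
    stepLaurent κ f = T (-1) * (stepPoly κ f).toLaurent := by
  rw [stepPoly, map_sum, mul_sum, stepLaurent]
  symm
  refine sum_nbij' (fun j => (j : ℤ) - 1) (fun k => (k + 1).toNat) ?_ ?_ ?_ ?_ fun j _ => ?_
  any_goals intro a ha; simp only [mem_range, mem_Icc] at ha ⊢; omega
  rw [Polynomial.toLaurent_C_mul_X_pow, sub_eq_neg_add, T_add]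
  ring

lemma coeff_zero_stepLaurent_pow (κ : ℤ → R) (f n : ℕ) :
    ((stepLaurent κ f) ^ n).coeff 0 = ((stepPoly κ f) ^ n).coeff n := by
  rw [stepLaurent_eq_T_neg_one_mul, mul_pow, T_pow, ← map_pow, mul_neg_one,
    coeff_zero_T_neg_mul_toLaurent]

lemma stepPoly_comp_C_mul_X (κ : ℤ → R) (f : ℕ) :
    (stepPoly κ f).comp (Polynomial.C (κ (-1)) * Polynomial.X)
      = Polynomial.C (κ (-1)) * Polynomial.oneAddSum (scaledCoeff κ) (f + 1) := by
  rw [stepPoly, sum_range_succ', Polynomial.oneAddSum, mul_add, mul_one, mul_sum, add_comm]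
  simp only [Polynomial.add_comp, Polynomial.sum_comp, Polynomial.mul_comp, Polynomial.C_comp,
    Polynomial.X_pow_comp, scaledCoeff]
  congr 1
  · simp
  · refine Finset.sum_congr rfl fun j _ => ?_
    simp only [Nat.cast_add, Nat.cast_one, add_sub_cancel_right, mul_pow, Polynomial.C_mul,
      Polynomial.C_pow]
    ring

theorem coeff_zero_stepLaurent_pow_succ [IsDomain R] {κ : ℤ → R} {f : ℕ} (ha : κ (-1) ≠ 0)
    (hκ : ∀ j : ℕ, f < j → κ j = 0) (n : ℕ) :
    ((stepLaurent κ f) ^ (n + 1)).coeff 0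
      = (n + 1) * scaledCoeff κ n
        + ((Polynomial.oneAddSum (scaledCoeff κ) n) ^ (n + 1)).coeff (n + 1) := by
  have hvanish : ∀ j, f + 1 ≤ j → scaledCoeff κ j = 0 := fun j hj => by
    simp [scaledCoeff, hκ j hj]
  rw [coeff_zero_stepLaurent_pow,
    Polynomial.coeff_pow_self_eq_of_comp_C_mul_X_eq ha (stepPoly_comp_C_mul_X κ f),
    ← Polynomial.oneAddSum_eq_of_le (le_max_left _ (n + 1)) hvanish,
    Polynomial.coeff_oneAddSum_pow_succ _ (Nat.lt_of_succ_le (le_max_right _ _))]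

end StepPolynomial

namespace MvPolynomial

noncomputable def constCoeffRemainder (n : ℕ) : MvPolynomial ℕ ℤ :=
  ((Polynomial.oneAddSum X n) ^ (n + 1)).coeff (n + 1)

lemma constCoeffRemainder_mem_supported (n : ℕ) :
    constCoeffRemainder n ∈ supported ℤ {j | j < n} :=
  Polynomial.coeff_oneAddSum_pow_mem (supported ℤ {j | j < n}).toSubring
    (fun _ hj => X_mem_supported.mpr hj) _ _

lemma aeval_constCoeffRemainder {R : Type*} [CommRing R] (c : ℕ → R) (n : ℕ) :
    aeval c (constCoeffRemainder n) = ((Polynomial.oneAddSum c n) ^ (n + 1)).coeff (n + 1) := by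
  have hmap : (Polynomial.oneAddSum X n).map (aeval (R := ℤ) c).toRingHom
      = Polynomial.oneAddSum c n := by
    rw [Polynomial.map_oneAddSum]
    exact Polynomial.oneAddSum_congr fun _ _ => by simp
  rw [constCoeffRemainder, ← hmap, ← Polynomial.map_pow, Polynomial.coeff_map]
  rfl

end MvPolynomial

section Identifiability

variable {R : Type*} [CommRing R]

lemma eq_zero_of_lt_of_support_subset_Icc {κ : ℤ → R} {f : ℕ}
    (h : ∀ k, κ k ≠ 0 → k ∈ Icc (-1 : ℤ) f) (j : ℕ) (hj : f < j) : κ j = 0 := by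
  by_contra hne
  have := mem_Icc.mp (h _ hne)
  omega

theorem scaledCoeff_eq_of_coeff_zero_stepLaurent_pow_eq [IsDomain R] [CharZero R]
    {κ κ' : ℤ → R} {f : ℕ} (ha : κ (-1) ≠ 0) (ha' : κ' (-1) ≠ 0)
    (hκ : ∀ j : ℕ, f < j → κ j = 0) (hκ' : ∀ j : ℕ, f < j → κ' j = 0)
    (hI : ∀ n ≤ f, ((stepLaurent κ f) ^ (n + 1)).coeff 0 = ((stepLaurent κ' f) ^ (n + 1)).coeff 0)
    (k : ℕ) (hk : k ≤ f) : scaledCoeff κ k = scaledCoeff κ' k := by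
  induction k using Nat.strong_induction_on with
  | _ k ih =>
    have hrem : Polynomial.oneAddSum (scaledCoeff κ) k = Polynomial.oneAddSum (scaledCoeff κ') k :=
      Polynomial.oneAddSum_congr fun j hj => ih j hj (by omega)
    have hIk := hI k hk
    rw [coeff_zero_stepLaurent_pow_succ ha hκ, coeff_zero_stepLaurent_pow_succ ha' hκ', hrem,
      add_left_inj] at hIk
    exact mul_left_cancel₀ (Nat.cast_add_one_ne_zero k) hIk

end Identifiability

/-- For `χ(t) = κ_{-1} t^{-1} + κ₀ + κ₁ t + ⋯ + κ_f t^f` with `κ_k ≥ 0` and `κ_{-1} > 0`,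
the constant coefficient of `χ(t)^n` equals `n·κ_{-1}^{n-1}·κ_{n-1}` plus a polynomial
with integer coefficients, depending only on `n`, in `κ₀, κ_{-1}κ₁, …, κ_{-1}^{n-2}κ_{n-2}`.
Consequently, the constant coefficients `I₁, …, I_{f+1}` of the powers of `χ` determine
`κ₀` and the products `κ_{-1}^k κ_k` for `1 ≤ k ≤ f`. -/
theorem const_coeff_pow_recursion :
    (∀ n : ℕ, 1 ≤ n → ∃ P : MvPolynomial ℕ ℤ,
      P ∈ MvPolynomial.supported ℤ {j : ℕ | j ≤ n - 2} ∧
      ∀ (f : ℕ) (κ : ℤ → ℝ), (∀ k, 0 ≤ κ k) → 0 < κ (-1) →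
        (∀ k, κ k ≠ 0 → k ∈ Finset.Icc (-1 : ℤ) (f : ℤ)) →
        (((∑ k ∈ Finset.Icc (-1 : ℤ) (f : ℤ), C (κ k) * T k : LaurentPolynomial ℝ)) ^ n).coeff 0
          = n * κ (-1) ^ (n - 1) * κ ((n : ℤ) - 1)
            + MvPolynomial.aeval (fun j : ℕ => κ (-1) ^ j * κ (j : ℤ)) P) ∧
    (∀ (f : ℕ) (κ κ' : ℤ → ℝ), (∀ k, 0 ≤ κ k) → (∀ k, 0 ≤ κ' k) →
      0 < κ (-1) → 0 < κ' (-1) →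
      (∀ k, κ k ≠ 0 → k ∈ Finset.Icc (-1 : ℤ) (f : ℤ)) →
      (∀ k, κ' k ≠ 0 → k ∈ Finset.Icc (-1 : ℤ) (f : ℤ)) →
      (∀ n : ℕ, 1 ≤ n → n ≤ f + 1 →
        (((∑ k ∈ Finset.Icc (-1 : ℤ) (f : ℤ), C (κ k) * T k : LaurentPolynomial ℝ)) ^ n).coeff 0
          = (((∑ k ∈ Finset.Icc (-1 : ℤ) (f : ℤ), C (κ' k) * T k : LaurentPolynomial ℝ)) ^ n).coeff 0) →
      ∀ k : ℕ, k ≤ f → κ (-1) ^ k * κ (k : ℤ) = κ' (-1) ^ k * κ' (k : ℤ)) := by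
  refine ⟨fun n hn => ?_, fun f κ κ' _ _ ha ha' hκ hκ' hI =>
    scaledCoeff_eq_of_coeff_zero_stepLaurent_pow_eq ha.ne' ha'.ne'
      (eq_zero_of_lt_of_support_subset_Icc hκ) (eq_zero_of_lt_of_support_subset_Icc hκ')
      fun n hn => hI (n + 1) (by omega) (by omega)⟩
  obtain ⟨m, rfl⟩ := Nat.exists_eq_add_of_le' hn
  refine ⟨MvPolynomial.constCoeffRemainder m,
    MvPolynomial.supported_mono (fun j hj => ?_) (MvPolynomial.constCoeffRemainder_mem_supported m),
    fun f κ _ ha hκ => ?_⟩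
  · simp only [Set.mem_ofPred_eq] at hj ⊢
    omega
  · have key := coeff_zero_stepLaurent_pow_succ ha.ne' (eq_zero_of_lt_of_support_subset_Icc hκ) m
    rw [← MvPolynomial.aeval_constCoeffRemainder] at key
    refine key.trans (congrArg₂ (· + ·) ?_ rfl)
    push_cast [Nat.add_sub_cancel, add_sub_cancel_right, scaledCoeff]
    ring
end
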